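/- Teleportation correctness: starting from |Ψ⟩ = (a₀|0⟩+a₁|1⟩) ⊗ (1/√2)(|0,0⟩+|1,1⟩) with |a₀|²+|a₁|²=1, applying XOR^(1,1)⊗Id, then Hadamard⊗Id⊗Id, the resulting state equals (1/2)[ |0,0⟩⊗(a₀|0⟩+a₁|1⟩) + |0,1⟩⊗(a₀|1⟩+a₁|0⟩) + |1,0⟩⊗(a₀|0⟩−a₁|1⟩) + |1,1⟩⊗(a₀|1⟩−a₁|0⟩) ]; consequently, applying the correction Id, NOT, Z, NOT∘Z respectively to the third qubit in each branch recovers a₀|0⟩+a₁|1⟩. -/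

import Mathlib

open scoped Matrix

/-- NOT gate on ℂ². -/
noncomputable def NOTm : Matrix (Fin 2) (Fin 2) ℂ := !![0, 1; 1, 0]
/-- Pauli Z. -/
noncomputable def Zm : Matrix (Fin 2) (Fin 2) ℂ := !![1, 0; 0, -1]
/-- Hadamard gate on ℂ². -/
noncomputable def Hm : Matrix (Fin 2) (Fin 2) ℂ :=
  (1 / (Real.sqrt 2 : ℂ)) • !![1, 1; 1, -1]

/-- XOR^(1,1) ⊗ Id on (ℂ²)^⊗3: |x,y,z⟩ ↦ |x, x+̂y, z⟩. -/
noncomputable def xor3 :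
    Matrix (Fin 2 × Fin 2 × Fin 2) (Fin 2 × Fin 2 × Fin 2) ℂ :=
  Matrix.of fun i j => if i = (j.1, j.1 + j.2.1, j.2.2) then 1 else 0

/-- Hadamard ⊗ Id ⊗ Id on (ℂ²)^⊗3. -/
noncomputable def had3 :
    Matrix (Fin 2 × Fin 2 × Fin 2) (Fin 2 × Fin 2 × Fin 2) ℂ :=
  Matrix.of fun i j => if i.2 = j.2 then Hm i.1 j.1 else 0

/-- The initial teleportation state (a₀|0⟩+a₁|1⟩) ⊗ (1/√2)(|0,0⟩+|1,1⟩). -/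
noncomputable def teleInit (a₀ a₁ : ℂ) : Fin 2 × Fin 2 × Fin 2 → ℂ :=
  fun p => (if p.1 = 0 then a₀ else a₁) *
    (if p.2.1 = p.2.2 then ((1 / Real.sqrt 2 : ℝ) : ℂ) else 0)

/-- The four-branch state
(1/2)[|0,0⟩⊗(a₀|0⟩+a₁|1⟩) + |0,1⟩⊗(a₀|1⟩+a₁|0⟩) + |1,0⟩⊗(a₀|0⟩−a₁|1⟩)
      + |1,1⟩⊗(a₀|1⟩−a₁|0⟩)]. -/
noncomputable def teleFinal (a₀ a₁ : ℂ) : Fin 2 × Fin 2 × Fin 2 → ℂ :=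
  fun p => (1 / 2 : ℂ) *
    (if p.1 = 0 then
      (if p.2.1 = 0 then ![a₀, a₁] p.2.2 else ![a₁, a₀] p.2.2)
     else
      (if p.2.1 = 0 then ![a₀, -a₁] p.2.2 else ![-a₁, a₀] p.2.2))

/-!
CNOT permutes the computational basis, so it acts on amplitudes by reindexing, and Hadamard on
the first qubit mixes the two amplitudes that agree on the last two qubits. Each of the eight
output amplitudes is then a single term, in which the factor `1/√2` of the Bell pair and the one
of the Hadamard gate combine to `1/2`.
-/

namespace Matrix

variable {ι κ R : Type*} [Fintype ι] [NonAssocSemiring R]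

theorem of_ite_eq_involutive_mulVec [DecidableEq ι] {f : ι → ι} (hf : Function.Involutive f)
    (v : ι → R) : (of fun i j => if i = f j then (1 : R) else 0) *ᵥ v = v ∘ f := by
  ext i
  have hfi (j : ι) : i = f j ↔ j = f i := by rw [eq_comm, hf.eq_iff]
  simp [mulVec, dotProduct, hfi]

theorem of_ite_snd_eq_mulVec_apply [Fintype κ] [DecidableEq κ] (A : Matrix ι ι R)
    (v : ι × κ → R) (i : ι × κ) :
    ((of fun i j : ι × κ => if i.2 = j.2 then A i.1 j.1 else 0) *ᵥ v) i =
      ∑ j, A i.1 j * v (j, i.2) := by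
  simp [mulVec, dotProduct, Fintype.sum_prod_type]

end Matrix

open Matrix

theorem xor_involutive :
    Function.Involutive fun p : Fin 2 × Fin 2 × Fin 2 => (p.1, p.1 + p.2.1, p.2.2) := by
  rintro ⟨x, y, z⟩
  fin_cases x <;> fin_cases y <;> rfl

theorem xor3_mulVec (v : Fin 2 × Fin 2 × Fin 2 → ℂ) :
    xor3 *ᵥ v = fun p => v (p.1, p.1 + p.2.1, p.2.2) :=
  of_ite_eq_involutive_mulVec xor_involutive v

theorem had3_mulVec_apply (v : Fin 2 × Fin 2 × Fin 2 → ℂ) (x y z : Fin 2) :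
    (had3 *ᵥ v) (x, y, z) = Hm x 0 * v (0, y, z) + Hm x 1 * v (1, y, z) := by
  rw [had3, of_ite_snd_eq_mulVec_apply, Fin.sum_univ_two]

theorem NOTm_mulVec (u v : ℂ) : NOTm *ᵥ ![u, v] = ![v, u] := by
  ext i; fin_cases i <;> simp [NOTm]

theorem Zm_mulVec (u v : ℂ) : Zm *ᵥ ![u, v] = ![u, -v] := by
  ext i; fin_cases i <;> simp [Zm]

theorem inv_sqrt_two_mul_self : (Real.sqrt 2 : ℂ)⁻¹ * (Real.sqrt 2 : ℂ)⁻¹ = 2⁻¹ := by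
  rw [← mul_inv, ← Complex.ofReal_mul, Real.mul_self_sqrt zero_le_two, Complex.ofReal_ofNat]

theorem teleportation_correct_general (a₀ a₁ : ℂ) :
    (had3 * xor3).mulVec (teleInit a₀ a₁) = teleFinal a₀ a₁ ∧
    (1 : Matrix (Fin 2) (Fin 2) ℂ).mulVec ![a₀, a₁] = ![a₀, a₁] ∧
    NOTm.mulVec ![a₁, a₀] = ![a₀, a₁] ∧
    Zm.mulVec ![a₀, -a₁] = ![a₀, a₁] ∧
    Zm.mulVec (NOTm.mulVec ![-a₁, a₀]) = ![a₀, a₁] := by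
  refine ⟨?_, one_mulVec _, NOTm_mulVec _ _, by rw [Zm_mulVec, neg_neg],
    by rw [NOTm_mulVec, Zm_mulVec, neg_neg]⟩
  ext ⟨x, y, z⟩
  rw [← mulVec_mulVec, had3_mulVec_apply, xor3_mulVec]
  fin_cases x <;> fin_cases y <;> fin_cases z <;>
    simp [teleInit, teleFinal, Hm, ← inv_sqrt_two_mul_self, mul_comm, mul_left_comm]

/-- Teleportation correctness: applying XOR⊗Id then Hadamard⊗Id⊗Id to
(a₀|0⟩+a₁|1⟩)⊗(1/√2)(|0,0⟩+|1,1⟩) yields the four-branch state, and applying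
the corrections Id, NOT, Z and NOT∘Z (i.e. NOT followed by Z) to the third qubit
of the respective branches recovers a₀|0⟩+a₁|1⟩. -/
theorem teleportation_correct (a₀ a₁ : ℂ) (hnorm : ‖a₀‖ ^ 2 + ‖a₁‖ ^ 2 = 1) :
    (had3 * xor3).mulVec (teleInit a₀ a₁) = teleFinal a₀ a₁ ∧
    (1 : Matrix (Fin 2) (Fin 2) ℂ).mulVec ![a₀, a₁] = ![a₀, a₁] ∧
    NOTm.mulVec ![a₁, a₀] = ![a₀, a₁] ∧
    Zm.mulVec ![a₀, -a₁] = ![a₀, a₁] ∧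
    Zm.mulVec (NOTm.mulVec ![-a₁, a₀]) = ![a₀, a₁] :=
  teleportation_correct_general a₀ a₁
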